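/- If the second smallest Laplacian eigenvalue of a finite undirected graph satisfies λ₂(L) > r − 1 for a positive integer r, then the graph is at least ⌊r/2⌋-robust. -/

import Mathlib

/-- A set `S` is `r`-reachable in `G` if some vertex in `S` has at least `r` neighbors outside `S`. -/
def rReachable {V : Type*} (G : SimpleGraph V) (r : ℕ) (S : Set V) : Prop :=
  ∃ i ∈ S, r ≤ ({j | G.Adj i j} \ S).ncard

/-- A graph is `r`-robust if for every pair of nonempty disjoint vertex subsets,
at least one of them is `r`-reachable. -/
def rRobust {V : Type*} (G : SimpleGraph V) (r : ℕ) : Prop :=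
  ∀ X₁ X₂ : Set V, X₁.Nonempty → X₂.Nonempty → Disjoint X₁ X₂ →
    rReachable G r X₁ ∨ rReachable G r X₂

/-- The second smallest eigenvalue (with multiplicity) of the Laplacian matrix of `G`:
the algebraic connectivity. -/
noncomputable def lambda2 {V : Type*} [Fintype V] [DecidableEq V] (G : SimpleGraph V)
    [DecidableRel G.Adj] : ℝ :=
  if h : 1 < Fintype.card V then
    let f : Fin (Fintype.card V) → ℝ := fun i =>
      (SimpleGraph.posSemidef_lapMatrix ℝ G).1.eigenvalues ((Fintype.equivFin V).symm i)
    (f ∘ Tuple.sort f) ⟨1, h⟩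
  else 0

/-!
Expanding in an orthonormal eigenbasis of the Laplacian `L` gives the Rayleigh bound
`λ₂ ‖x‖² ≤ xᵀ L x` for every `x ⊥ 𝟙`: when `λ₂ > 0`, only the eigenvector of the smallest
eigenvalue can lie in `ker L ∋ 𝟙`, so `x` has no component along it.
For `x = n 𝟙_S - |S| 𝟙` one has `‖x‖² = n |S| |Sᶜ|` and `xᵀ L x = n² e(S, Sᶜ)`, whence
`λ₂ |S| |Sᶜ| ≤ n e(S, Sᶜ)`. If neither `X₁` nor `X₂` were `⌊r/2⌋`-reachable, the smaller one `S`
would have `|S| ≤ n / 2` and `e(S, Sᶜ) ≤ |S| (⌊r/2⌋ - 1)`, so `λ₂ ≤ 2 ⌊r/2⌋ - 2 ≤ r - 2`.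
-/

open Finset Matrix

namespace Matrix.IsHermitian

variable {n : Type*} [Fintype n] [DecidableEq n] {A : Matrix n n ℝ} (hA : A.IsHermitian)

lemma eigenvectorBasis_dotProduct_mulVec (x : n → ℝ) (j : n) :
    ⇑(hA.eigenvectorBasis j) ⬝ᵥ (A *ᵥ x) = hA.eigenvalues j * (⇑(hA.eigenvectorBasis j) ⬝ᵥ x) := by
  rw [dotProduct_mulVec, ← mulVec_transpose, ← conjTranspose_eq_transpose_of_trivial, hA.eq,
    hA.mulVec_eigenvectorBasis, smul_dotProduct, smul_eq_mul]

lemma sum_eigenvectorBasis_dotProduct_mul (x y : n → ℝ) :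
    ∑ j, (⇑(hA.eigenvectorBasis j) ⬝ᵥ x) * (⇑(hA.eigenvectorBasis j) ⬝ᵥ y) = x ⬝ᵥ y := by
  have := hA.eigenvectorBasis.sum_inner_mul_inner (WithLp.toLp 2 x) (WithLp.toLp 2 y)
  simp only [EuclideanSpace.inner_eq_star_dotProduct, star_trivial] at this
  simpa only [dotProduct_comm] using this

lemma dotProduct_mulVec_eq_sum (x : n → ℝ) :
    x ⬝ᵥ (A *ᵥ x) = ∑ j, hA.eigenvalues j * (⇑(hA.eigenvectorBasis j) ⬝ᵥ x) ^ 2 := by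
  rw [dotProduct_comm, ← hA.sum_eigenvectorBasis_dotProduct_mul]
  simp only [hA.eigenvectorBasis_dotProduct_mulVec, sq, mul_assoc]

lemma mul_dotProduct_self_le_of_dotProduct_eq_zero {m : ℝ} (j₀ : n)
    (hm : ∀ j ≠ j₀, m ≤ hA.eigenvalues j) {x : n → ℝ}
    (hx : ⇑(hA.eigenvectorBasis j₀) ⬝ᵥ x = 0) :
    m * (x ⬝ᵥ x) ≤ x ⬝ᵥ (A *ᵥ x) := by
  rw [hA.dotProduct_mulVec_eq_sum, ← hA.sum_eigenvectorBasis_dotProduct_mul, mul_sum]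
  refine sum_le_sum fun j _ ↦ ?_
  rcases eq_or_ne j j₀ with rfl | hj
  · simp [hx]
  · rw [← sq]
    exact mul_le_mul_of_nonneg_right (hm j hj) (sq_nonneg _)

lemma eigenvectorBasis_dotProduct_eq_zero_of_mulVec_eq_zero {u : n → ℝ} (hu : A *ᵥ u = 0)
    (hu₀ : u ≠ 0) {j₀ : n} (hne : ∀ j ≠ j₀, hA.eigenvalues j ≠ 0) {x : n → ℝ}
    (hx : u ⬝ᵥ x = 0) : ⇑(hA.eigenvectorBasis j₀) ⬝ᵥ x = 0 := by
  have hperp : ∀ j ≠ j₀, ⇑(hA.eigenvectorBasis j) ⬝ᵥ u = 0 := fun j hj ↦ by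
    have := hA.eigenvectorBasis_dotProduct_mulVec u j
    rw [hu, dotProduct_zero, eq_comm, mul_eq_zero] at this
    exact this.resolve_left (hne j hj)
  have hsingle : ∀ y, u ⬝ᵥ y =
      (⇑(hA.eigenvectorBasis j₀) ⬝ᵥ u) * (⇑(hA.eigenvectorBasis j₀) ⬝ᵥ y) := fun y ↦ by
    rw [← hA.sum_eigenvectorBasis_dotProduct_mul]
    exact sum_eq_single j₀ (fun j _ hj ↦ by rw [hperp j hj, zero_mul]) (by simp)
  have hu₀' : ⇑(hA.eigenvectorBasis j₀) ⬝ᵥ u ≠ 0 := fun h ↦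
    hu₀ (dotProduct_self_eq_zero.mp (by rw [hsingle, h, zero_mul]))
  rw [hsingle] at hx
  exact (mul_eq_zero.mp hx).resolve_left hu₀'

end Matrix.IsHermitian

lemma Tuple.exists_forall_ne_sort_one_le {α : Type*} [LinearOrder α] {n : ℕ} (f : Fin n → α)
    (hn : 1 < n) : ∃ i₀, ∀ i ≠ i₀, (f ∘ Tuple.sort f) ⟨1, hn⟩ ≤ f i := by
  refine ⟨Tuple.sort f ⟨0, by omega⟩, fun i hi ↦ ?_⟩
  have hk : (⟨1, hn⟩ : Fin n) ≤ (Tuple.sort f).symm i := by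
    have : (Tuple.sort f).symm i ≠ ⟨0, by omega⟩ := fun h ↦ hi (by rw [← h, Equiv.apply_symm_apply])
    rw [Fin.le_def]
    exact Nat.one_le_iff_ne_zero.mpr (fun h ↦ this (Fin.ext h))
  simpa using Tuple.monotone_sort f hk

namespace SimpleGraph

variable {V : Type*} [Fintype V] [DecidableEq V] (G : SimpleGraph V) [DecidableRel G.Adj]

lemma exists_forall_ne_lambda2_le_eigenvalues (hV : 1 < Fintype.card V) :
    ∃ j₀, ∀ j ≠ j₀, lambda2 G ≤ (G.posSemidef_lapMatrix ℝ).1.eigenvalues j := by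
  obtain ⟨i₀, hi₀⟩ := Tuple.exists_forall_ne_sort_one_le
    (fun i ↦ (G.posSemidef_lapMatrix ℝ).1.eigenvalues ((Fintype.equivFin V).symm i)) hV
  refine ⟨(Fintype.equivFin V).symm i₀, fun j hj ↦ ?_⟩
  rw [lambda2, dif_pos hV]
  simpa using hi₀ (Fintype.equivFin V j) (by rintro rfl; simp at hj)

theorem lambda2_mul_dotProduct_self_le {x : V → ℝ} (hx : ∑ i, x i = 0) :
    lambda2 G * (x ⬝ᵥ x) ≤ x ⬝ᵥ (G.lapMatrix ℝ *ᵥ x) := by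
  have hL := G.posSemidef_lapMatrix ℝ
  rcases le_or_gt (lambda2 G) 0 with hnonpos | hpos
  · have hquad := hL.dotProduct_mulVec_nonneg x
    rw [star_trivial] at hquad
    have hnorm : 0 ≤ x ⬝ᵥ x := by simpa using dotProduct_self_star_nonneg x
    exact (mul_nonpos_of_nonpos_of_nonneg hnonpos hnorm).trans hquad
  have hV : 1 < Fintype.card V := by
    by_contra hV
    rw [lambda2, dif_neg hV] at hpos
    exact hpos.false
  obtain ⟨j₀, hj₀⟩ := G.exists_forall_ne_lambda2_le_eigenvalues hV
  -- All other eigenvalues are positive, so the `j₀`-th eigenvector spans the kernel of `L`,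
  -- which contains `𝟙`; hence it is orthogonal to `x ⊥ 𝟙`.
  have : Nonempty V := Fintype.card_pos_iff.mp (by omega)
  refine hL.1.mul_dotProduct_self_le_of_dotProduct_eq_zero j₀ hj₀ ?_
  refine hL.1.eigenvectorBasis_dotProduct_eq_zero_of_mulVec_eq_zero
    G.lapMatrix_mulVec_const_eq_zero (fun h ↦ by simpa using congr_fun h (Classical.arbitrary V))
    (fun j hj ↦ (hpos.trans_le (hj₀ j hj)).ne') ?_
  simpa [dotProduct] using hx

lemma indicator_dotProduct_lapMatrix_mulVec_indicator (s : Finset V) :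
    (fun i ↦ if i ∈ s then (1 : ℝ) else 0) ⬝ᵥ
        (G.lapMatrix ℝ *ᵥ fun i ↦ if i ∈ s then 1 else 0) =
      ∑ i ∈ s, (#(G.neighborFinset i \ s) : ℝ) := by
  simp only [dotProduct, ite_mul, one_mul, zero_mul, sum_ite_mem, univ_inter]
  refine sum_congr rfl fun i hi ↦ ?_
  rw [lapMatrix_mulVec_apply, if_pos hi, sum_boole, mul_one, ← card_neighborFinset_eq_degree,
    ← card_filter_add_card_filter_not (· ∈ s), sdiff_eq_filter]
  push_cast
  ring

lemma one_dotProduct_lapMatrix_mulVec (x : V → ℝ) :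
    (fun _ ↦ (1 : ℝ)) ⬝ᵥ (G.lapMatrix ℝ *ᵥ x) = 0 := by
  rw [dotProduct_mulVec, ← mulVec_transpose, (G.isSymm_lapMatrix (R := ℝ)).eq,
    lapMatrix_mulVec_const_eq_zero, zero_dotProduct]

theorem lambda2_mul_card_mul_card_compl_le (s : Finset V) :
    lambda2 G * (#s * #sᶜ) ≤ (Fintype.card V : ℝ) * ∑ i ∈ s, (#(G.neighborFinset i \ s) : ℝ) := by
  rcases isEmpty_or_nonempty V with hV | hV
  · simp [s.eq_empty_of_isEmpty]
  set n : ℝ := (Fintype.card V : ℝ)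
  set k : ℝ := (#s : ℝ)
  set χ : V → ℝ := fun i ↦ if i ∈ s then 1 else 0
  set x : V → ℝ := fun i ↦ n * χ i - k
  have hcompl : (#sᶜ : ℝ) = n - k := by
    rw [card_compl, Nat.cast_sub (card_le_univ s)]
  have hsum : ∑ i, x i = 0 := by
    have hχ : ∑ i, χ i = k := by simp [χ, k]
    rw [sum_sub_distrib, ← mul_sum, hχ, sum_const, card_univ, nsmul_eq_mul]
    ring
  have hnorm : x ⬝ᵥ x = n * (k * #sᶜ) := by
    have hin : ∀ i ∈ s, x i * x i = (n - k) ^ 2 := fun i hi ↦ by simp [x, χ, hi, sq]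
    have hout : ∀ i ∈ sᶜ, x i * x i = k ^ 2 := fun i hi ↦ by
      simp [x, χ, mem_compl.mp hi, sq]
    rw [dotProduct, ← sum_add_sum_compl s, sum_congr rfl hin, sum_congr rfl hout, sum_const,
      sum_const, nsmul_eq_mul, nsmul_eq_mul, hcompl]
    ring
  have hquad :
      x ⬝ᵥ (G.lapMatrix ℝ *ᵥ x) = n * (n * ∑ i ∈ s, (#(G.neighborFinset i \ s) : ℝ)) := by
    have hx : x = n • χ - k • fun _ ↦ 1 := by ext i; simp [x]
    have hLx : G.lapMatrix ℝ *ᵥ x = n • G.lapMatrix ℝ *ᵥ χ := by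
      rw [hx, mulVec_sub, mulVec_smul, mulVec_smul, lapMatrix_mulVec_const_eq_zero, smul_zero,
        sub_zero]
    rw [hLx, dotProduct_smul, hx, sub_dotProduct, smul_dotProduct, smul_dotProduct,
      one_dotProduct_lapMatrix_mulVec, G.indicator_dotProduct_lapMatrix_mulVec_indicator]
    simp
  have hrayleigh := G.lambda2_mul_dotProduct_self_le hsum
  rw [hnorm, hquad, mul_left_comm] at hrayleigh
  exact le_of_mul_le_mul_left hrayleigh (by positivity)

theorem lambda2_le_two_mul_of_forall_card_neighborFinset_sdiff_le {s : Finset V}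
    (hs : s.Nonempty) (hsV : 2 * #s ≤ Fintype.card V) {D : ℝ}
    (hD : ∀ i ∈ s, (#(G.neighborFinset i \ s) : ℝ) ≤ D) : lambda2 G ≤ 2 * D := by
  have hcut : ∑ i ∈ s, (#(G.neighborFinset i \ s) : ℝ) ≤ #s * D := by
    simpa using sum_le_sum hD
  have hD₀ : 0 ≤ D := (Nat.cast_nonneg _).trans (hD _ hs.choose_spec)
  have hcompl : #s + #sᶜ = Fintype.card V := card_add_card_compl s
  have hs₀ : 0 < #s := hs.card_pos
  have hV : (Fintype.card V : ℝ) ≤ 2 * #sᶜ := by exact_mod_cast (by omega : _ ≤ 2 * #sᶜ)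
  have key : lambda2 G * (#s * #sᶜ) ≤ 2 * D * (#s * #sᶜ) := calc
    _ ≤ (Fintype.card V : ℝ) * ∑ i ∈ s, (#(G.neighborFinset i \ s) : ℝ) :=
      G.lambda2_mul_card_mul_card_compl_le s
    _ ≤ 2 * #sᶜ * (#s * D) := by gcongr
    _ = 2 * D * (#s * #sᶜ) := by ring
  have hc₀ : 0 < #sᶜ := by omega
  exact le_of_mul_le_mul_right key (by positivity)

lemma rReachable_coe_iff {s : Finset V} {d : ℕ} :
    rReachable G d s ↔ ∃ i ∈ s, d ≤ #(G.neighborFinset i \ s) := by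
  have h : ∀ i, {j | G.Adj i j} \ (s : Set V) = ↑(G.neighborFinset i \ s) := fun i ↦ by
    ext; simp
  simp only [rReachable, h, Set.ncard_coe_finset, mem_coe]

theorem lambda2_le_of_not_rReachable {s : Finset V} (hs : s.Nonempty)
    (hsV : 2 * #s ≤ Fintype.card V) {d : ℕ} (hd : ¬ rReachable G d s) :
    lambda2 G ≤ 2 * ((d : ℝ) - 1) := by
  simp only [rReachable_coe_iff, not_exists, not_and, not_le] at hd
  refine G.lambda2_le_two_mul_of_forall_card_neighborFinset_sdiff_le hs hsV fun i hi ↦ ?_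
  have : (#(G.neighborFinset i \ s) : ℝ) + 1 ≤ d := by exact_mod_cast hd i hi
  linarith

end SimpleGraph

theorem lambda2_gt_imp_robust_general {V : Type*} [Fintype V] [DecidableEq V]
    (G : SimpleGraph V) [DecidableRel G.Adj] (r : ℕ)
    (h : (r : ℝ) - 1 < lambda2 G) : rRobust G (r / 2) := by
  intro X₁ X₂ hX₁ hX₂ hdisj
  lift X₁ to Finset V using X₁.toFinite
  lift X₂ to Finset V using X₂.toFinite
  by_contra! hnot
  have hcard : #X₁ + #X₂ ≤ Fintype.card V := by
    rw [← card_union_of_disjoint (disjoint_coe.mp hdisj)]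
    exact card_le_univ _
  have hle : lambda2 G ≤ 2 * (((r / 2 : ℕ) : ℝ) - 1) := by
    rcases le_total #X₁ #X₂ with h₁₂ | h₂₁
    · exact G.lambda2_le_of_not_rReachable (coe_nonempty.mp hX₁) (by omega) hnot.1
    · exact G.lambda2_le_of_not_rReachable (coe_nonempty.mp hX₂) (by omega) hnot.2
  have : 2 * ((r / 2 : ℕ) : ℝ) ≤ r := by exact_mod_cast Nat.mul_div_le r 2
  linarith

/-- If the second smallest Laplacian eigenvalue exceeds r - 1 for a positive integer r,
then the graph is at least ⌊r/2⌋-robust. -/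
theorem lambda2_gt_imp_robust {V : Type*} [Fintype V] [DecidableEq V]
    (G : SimpleGraph V) [DecidableRel G.Adj] (r : ℕ) (hr : 0 < r)
    (h : (r : ℝ) - 1 < lambda2 G) : rRobust G (r / 2) :=
  lambda2_gt_imp_robust_general G r h
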